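/- arXiv:1507.00641 — 2 statements merged into one kernel-verified Lean document; each statement's English description precedes it below -/
import Mathlib

section
/- Let α ∈ (−1,1), m ∈ ℕ, and g(x) = x for x ∈ [0,1]. Suppose f is of Type(α, m+1, {0}). For n ∈ ℕ let x_j := κ^{j/n−1} for j = 0, …, n, N_j := 1, and define Q_{κ,n,m}^Λ[f,g] := Σ_{j=1}^n Q_{N_j,κ,m}^{[x_{j−1},x_j]}[f,g]. Then there exists a positive constant c, independent of κ and n, such that for all κ > 1 and all n ∈ ℕ with n ≥ ln κ/ln 2, |∫_{1/κ}^1 f(x) e^{iκx} dx − Q_{κ,n,m}^Λ[f,g]| ≤ c κ^{−α−1} (ln κ) θ_n^{m−1}, where θ_n := κ^{1/n} − 1. -/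
open scoped BigOperators
open MeasureTheory

noncomputable section

/-- Oscillatory integral `∫_a^b f(x) e^{iκ g(x)} dx`. -/
def oscInt (κ : ℝ) (f g : ℝ → ℝ) (a b : ℝ) : ℂ :=
  ∫ x in a..b, (f x : ℂ) * Complex.exp (Complex.I * κ * g x)

/-- Moment-free Filon rule: `∫_{g(t_0)}^{g(t_m)} p_m(x) e^{iκx} dx` where `p_m` is the
Lagrange polynomial interpolating `Ψ` at the points `g(t_j)`. -/
def filonQ (κ : ℝ) (m : ℕ) (g : ℝ → ℝ) (Ψ : ℝ → ℝ) (t : Fin (m+1) → ℝ) : ℂ :=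
  ∫ x in (g (t 0))..(g (t (Fin.last m))),
    (((Lagrange.interpolate Finset.univ (fun j => g (t j)) (fun j => Ψ (g (t j)))).eval x : ℝ) : ℂ)
      * Complex.exp (Complex.I * κ * x)

/-- Composite moment-free Filon rule `Q_{N,κ,m}^{[a,b]}[f,g] = Σ_{l=1}^N Q_{κ,m}^{[y_{l-1},y_l]}`,
with the nodes on each subinterval supplied by `t`. -/
def compFilonQ (κ : ℝ) (m N : ℕ) (g : ℝ → ℝ) (Ψ : ℝ → ℝ)
    (t : Fin N → Fin (m+1) → ℝ) : ℂ :=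
  ∑ l : Fin N, filonQ κ m g Ψ (t l)

/-- Admissible node families for the composite rule on `[a,b]` with `N` equal subintervals:
on the `l`-th subinterval `[y_l, y_{l+1}]` (`y_l = a + (b-a) l/N`) the `m+1` strictly
increasing nodes include both endpoints. -/
def FilonNodes (a b : ℝ) (m N : ℕ) (t : Fin N → Fin (m+1) → ℝ) : Prop :=
  ∀ l : Fin N, StrictMono (t l) ∧ t l 0 = a + (b-a)*(l:ℝ)/(N:ℝ) ∧
    t l (Fin.last m) = a + (b-a)*((l:ℝ)+1)/(N:ℝ)

/-- `κ_{σ(r)} := κ` if `σ(r) ≤ 1`, and `κ σ(r)` otherwise. -/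
def kappaSigma (κ σr : ℝ) : ℝ := if σr ≤ 1 then κ else κ * σr

/-- Graded node `x_j := κσ^{((j/n)-1)/(r+1)}` of the partition of `Λ = [λ_r, 1]`. -/
def nodeX (κσ : ℝ) (r n j : ℕ) : ℝ := κσ ^ ((((j:ℝ)/(n:ℝ)) - 1)/((r:ℝ)+1))

/-!
On each graded subinterval `[x_{j-1}, x_j]` the interpolation error `ψ = f - p_m` vanishes at the
`m + 1` nodes, so iterated Rolle gives `|ψ'| ≤ M h^m` and `|ψ''| ≤ M h^(m-1)`, where
`h = x_j - x_{j-1} = x_{j-1} θ_n` and `M = sup |f^{(m+1)}| ≤ c_f x_{j-1}^(α-m-1)`. As `ψ` vanishes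
at both endpoints, two integrations by parts bound the local error by `3 M h^m / κ²`. The geometric
grading turns `x_{j-1}^(α-m-1) h^m` into `x_{j-1}^(α-1) θ_n^m ≤ κ^(1-α) θ_n^m`, and summing the `n`
pieces costs `n θ_n ≤ 2 log κ`, which holds once `κ^(1/n) ≤ 2`.
-/

open Set Complex intervalIntegral

section Calculus

variable {𝕜 F : Type*} [NontriviallyNormedField 𝕜] [NormedAddCommGroup F] [NormedSpace 𝕜 F]

theorem iteratedDerivWithin_subset {f : 𝕜 → F} {s t : Set 𝕜} {n : ℕ} {x : 𝕜} (st : s ⊆ t)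
    (hs : UniqueDiffOn 𝕜 s) (ht : UniqueDiffOn 𝕜 t) (hf : ContDiffOn 𝕜 n f t) (hx : x ∈ s) :
    iteratedDerivWithin n f s x = iteratedDerivWithin n f t x := by
  simp only [iteratedDerivWithin, iteratedFDerivWithin_subset st hs ht hf hx]

theorem Polynomial.contDiff_eval (p : Polynomial 𝕜) (n : WithTop ℕ∞) :
    ContDiff 𝕜 n fun x => p.eval x := by
  simpa using p.contDiff_aeval (𝕜 := 𝕜) n

theorem Polynomial.iteratedDerivWithin_eval_eq_zero {p : Polynomial 𝕜} {k : ℕ}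
    (hp : p.natDegree < k) {s : Set 𝕜} (hs : UniqueDiffOn 𝕜 s) {x : 𝕜} (hx : x ∈ s) :
    iteratedDerivWithin k (fun y => p.eval y) s x = 0 := by
  have hiter : ∀ j : ℕ, deriv^[j] (fun y => p.eval y) = fun y => (derivative^[j] p).eval y := by
    intro j
    induction j with
    | zero => rfl
    | succ j ih =>
      funext y
      rw [Function.iterate_succ_apply', ih, Function.iterate_succ_apply']
      exact Polynomial.deriv _
  rw [iteratedDerivWithin_eq_iteratedDeriv hs ((p.contDiff_eval k).contDiffAt) hx,
    iteratedDeriv_eq_iterate, hiter, Polynomial.iterate_derivative_eq_zero hp]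
  exact eval_zero

end Calculus

section Rolle

variable {a b : ℝ}

theorem exists_strictMono_deriv_eq_zero {F : ℝ → ℝ} {q : ℕ} {z : Fin (q + 1) → ℝ}
    (hz : StrictMono z) (hF : ContinuousOn F (Icc (z 0) (z (Fin.last q))))
    (h0 : ∀ i, F (z i) = 0) :
    ∃ w : Fin q → ℝ, StrictMono w ∧
      ∀ i, w i ∈ Ioo (z i.castSucc) (z i.succ) ∧ deriv F (w i) = 0 := by
  have hrolle : ∀ i : Fin q, ∃ c ∈ Ioo (z i.castSucc) (z i.succ), deriv F c = 0 := fun i =>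
    exists_deriv_eq_zero (hz Fin.castSucc_lt_succ)
      (hF.mono (Icc_subset_Icc (hz.monotone (Fin.zero_le _)) (hz.monotone (Fin.le_last _))))
      ((h0 _).trans (h0 _).symm)
  choose w hw hw0 using hrolle
  refine ⟨w, fun i j hij => ?_, fun i => ⟨hw i, hw0 i⟩⟩
  calc w i < z i.succ := (hw i).2
    _ ≤ z j.castSucc := hz.monotone (Fin.succ_le_castSucc_iff.mpr hij)
    _ < w j := (hw j).1

theorem exists_strictMono_iteratedDerivWithin_eq_zero (hab : a < b) {q k : ℕ} {ψ : ℝ → ℝ}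
    (hψ : ContDiffOn ℝ k ψ (Icc a b)) {z : Fin (q + k) → ℝ} (hz : StrictMono z)
    (hmem : ∀ i, z i ∈ Icc a b) (h0 : ∀ i, ψ (z i) = 0) :
    ∃ w : Fin q → ℝ, StrictMono w ∧
      ∀ i, w i ∈ Icc a b ∧ iteratedDerivWithin k ψ (Icc a b) (w i) = 0 := by
  induction k generalizing ψ with
  | zero => exact ⟨z, hz, fun i => ⟨hmem i, by simpa using h0 i⟩⟩
  | succ k ih =>
    obtain ⟨w, hw, hwz⟩ := exists_strictMono_deriv_eq_zero hz
      (hψ.continuousOn.mono (Icc_subset_Icc (hmem 0).1 (hmem _).2)) h0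
    have hwIoo : ∀ i, w i ∈ Ioo a b := fun i =>
      ⟨(hmem _).1.trans_lt (hwz i).1.1, (hwz i).1.2.trans_le (hmem _).2⟩
    have hψ' : ContDiffOn ℝ k (derivWithin ψ (Icc a b)) (Icc a b) :=
      hψ.derivWithin (uniqueDiffOn_Icc hab) le_rfl
    obtain ⟨v, hv, hvz⟩ := ih hψ' hw (fun i => Ioo_subset_Icc_self (hwIoo i)) fun i => by
      rw [derivWithin_of_mem_nhds (Icc_mem_nhds (hwIoo i).1 (hwIoo i).2)]
      exact (hwz i).2
    exact ⟨v, hv, fun i => ⟨(hvz i).1, by rw [iteratedDerivWithin_succ']; exact (hvz i).2⟩⟩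

theorem abs_le_mul_of_eq_zero_of_abs_derivWithin_le {g : ℝ → ℝ} {w L : ℝ}
    (hg : DifferentiableOn ℝ g (Icc a b))
    (hL : ∀ x ∈ Icc a b, |derivWithin g (Icc a b) x| ≤ L) (hw : w ∈ Icc a b) (hgw : g w = 0)
    {x : ℝ} (hx : x ∈ Icc a b) : |g x| ≤ L * (b - a) := by
  have hmvt := (convex_Icc a b).norm_image_sub_le_of_norm_derivWithin_le hg hL hw hx
  have hL0 : 0 ≤ L := (abs_nonneg _).trans (hL x hx)
  rw [hgw, sub_zero, Real.norm_eq_abs, Real.norm_eq_abs] at hmvt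
  exact hmvt.trans (mul_le_mul_of_nonneg_left
    (abs_sub_le_iff.mpr ⟨by linarith [hx.2, hw.1], by linarith [hx.1, hw.2]⟩) hL0)

theorem abs_iteratedDerivWithin_le_of_zeros (hab : a < b) {p : ℕ} {ψ : ℝ → ℝ} {M : ℝ}
    (hψ : ContDiffOn ℝ p ψ (Icc a b))
    (hM : ∀ x ∈ Icc a b, |iteratedDerivWithin p ψ (Icc a b) x| ≤ M)
    {z : Fin p → ℝ} (hz : StrictMono z) (hmem : ∀ i, z i ∈ Icc a b) (h0 : ∀ i, ψ (z i) = 0)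
    {k : ℕ} (hk : k ≤ p) : ∀ x ∈ Icc a b,
      |iteratedDerivWithin k ψ (Icc a b) x| ≤ M * (b - a) ^ (p - k) := by
  induction hk using Nat.decreasingInduction with
  | self => simpa using hM
  | of_succ k hkp ih =>
    obtain ⟨q, rfl⟩ : ∃ q, p = (q + 1) + k := ⟨p - k - 1, by omega⟩
    obtain ⟨w, -, hw⟩ := exists_strictMono_iteratedDerivWithin_eq_zero hab
      (hψ.of_le (by exact_mod_cast Nat.le_add_left k (q + 1))) hz hmem h0
    intro x hx
    have hdiff : DifferentiableOn ℝ (iteratedDerivWithin k ψ (Icc a b)) (Icc a b) :=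
      hψ.differentiableOn_iteratedDerivWithin (by exact_mod_cast hkp) (uniqueDiffOn_Icc hab)
    have := abs_le_mul_of_eq_zero_of_abs_derivWithin_le hdiff
      (fun y hy => by rw [← iteratedDerivWithin_succ]; exact ih y hy) (hw 0).1 (hw 0).2 hx
    rwa [mul_assoc, ← pow_succ, show q + 1 + k - (k + 1) + 1 = q + 1 + k - k by omega] at this

end Rolle

section Oscillatory

variable {κ a b : ℝ}

theorem intervalIntegrable_ofReal_mul_cexp {g : ℝ → ℝ} (hab : a ≤ b)
    (hg : ContinuousOn g (Icc a b)) :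
    IntervalIntegrable (fun x => (g x : ℂ) * cexp (I * κ * x)) volume a b :=
  ((continuous_ofReal.comp_continuousOn hg).mul
    (by fun_prop : Continuous fun x : ℝ => cexp (I * κ * x)).continuousOn).intervalIntegrable_of_Icc
    hab

theorem hasDerivAt_cexp_mul_div_pow {c : ℂ} (hc : c ≠ 0) (k : ℕ) (x : ℝ) :
    HasDerivAt (fun y : ℝ => cexp (c * y) / c ^ (k + 1)) (cexp (c * x) / c ^ k) x := by
  refine (((hasDerivAt_id (x : ℂ)).const_mul c).cexp.div_const (c ^ (k + 1))).comp_ofReal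
    |>.congr_deriv ?_
  rw [id, mul_one, pow_succ, mul_div_mul_right _ _ hc]

theorem norm_cexp_I_mul (κ x : ℝ) : ‖cexp (I * κ * x)‖ = 1 := by
  rw [show I * κ * x = I * ((κ * x : ℝ) : ℂ) by push_cast; ring]
  exact norm_exp_I_mul_ofReal _

theorem integral_ofReal_mul_cexp_eq_of_eq_zero (hκ : κ ≠ 0) (hab : a < b) {φ : ℝ → ℝ}
    (hφ : ContDiffOn ℝ 2 φ (Icc a b)) (ha : φ a = 0) (hb : φ b = 0) :
    let φ' := derivWithin φ (Icc a b)
    let φ'' := derivWithin φ' (Icc a b)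
    let E : ℝ → ℂ := fun x => cexp (I * κ * x)
    ∫ x in a..b, (φ x : ℂ) * E x = -((φ' b : ℂ) * (E b / (I * κ) ^ 2)
      - (φ' a : ℂ) * (E a / (I * κ) ^ 2) - ∫ x in a..b, (φ'' x : ℂ) * (E x / (I * κ) ^ 2)) := by
  intro φ' φ'' E
  set s := Icc a b
  set c : ℂ := I * κ
  have hs : UniqueDiffOn ℝ s := uniqueDiffOn_Icc hab
  have huIcc : uIcc a b = s := uIcc_of_le hab.le
  have hc : c ≠ 0 := mul_ne_zero I_ne_zero (ofReal_ne_zero.mpr hκ)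
  have hφ1 : ContDiffOn ℝ 1 φ' s := hφ.derivWithin hs (by norm_num)
  have hφ' : ∀ x ∈ uIcc a b, HasDerivWithinAt (fun y => (φ y : ℂ)) (φ' x) (uIcc a b) x := by
    rw [huIcc]
    exact fun x hx => (hφ.differentiableOn (by norm_num) x hx).hasDerivWithinAt.ofReal_comp
  have hφ'' : ∀ x ∈ uIcc a b, HasDerivWithinAt (fun y => (φ' y : ℂ)) (φ'' x) (uIcc a b) x := by
    rw [huIcc]
    exact fun x hx => (hφ1.differentiableOn (by norm_num) x hx).hasDerivWithinAt.ofReal_comp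
  have hE : ∀ x, HasDerivAt (fun y => E y / c) (E x) x := fun x => by
    simpa using hasDerivAt_cexp_mul_div_pow hc 0 x
  have hE' : ∀ x, HasDerivAt (fun y => E y / c ^ 2) (E x / c) x := fun x => by
    simpa using hasDerivAt_cexp_mul_div_pow hc 1 x
  have hEc : Continuous E := by fun_prop
  have hint : ∀ g : ℝ → ℝ, ContinuousOn g s → IntervalIntegrable (fun x => (g x : ℂ)) volume a b :=
    fun g hg => (continuous_ofReal.comp_continuousOn hg).intervalIntegrable_of_Icc hab.le
  rw [integral_mul_deriv_eq_deriv_mul_of_hasDerivWithinAt hφ' (fun x _ => (hE x).hasDerivWithinAt)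
      (hint φ' hφ1.continuousOn) (hEc.intervalIntegrable a b),
    integral_mul_deriv_eq_deriv_mul_of_hasDerivWithinAt hφ'' (fun x _ => (hE' x).hasDerivWithinAt)
      (hint φ'' (hφ1.continuousOn_derivWithin hs le_rfl))
      ((hEc.div_const c).intervalIntegrable a b)]
  simp [ha, hb]

theorem norm_integral_ofReal_mul_cexp_le (hκ : 0 < κ) (hab : a < b) {φ : ℝ → ℝ}
    (hφ : ContDiffOn ℝ 2 φ (Icc a b)) (ha : φ a = 0) (hb : φ b = 0) {B₁ B₂ : ℝ}
    (hB₁ : ∀ x ∈ Icc a b, |iteratedDerivWithin 1 φ (Icc a b) x| ≤ B₁)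
    (hB₂ : ∀ x ∈ Icc a b, |iteratedDerivWithin 2 φ (Icc a b) x| ≤ B₂) :
    ‖∫ x in a..b, (φ x : ℂ) * cexp (I * κ * x)‖ ≤ (2 * B₁ + (b - a) * B₂) / κ ^ 2 := by
  have hnorm : ∀ (y : ℝ) {B : ℝ}, |y| ≤ B → ∀ x : ℝ,
      ‖(y : ℂ) * (cexp (I * κ * x) / (I * κ) ^ 2)‖ ≤ B / κ ^ 2 := fun y B hy x => by
    rw [norm_mul, norm_div, norm_cexp_I_mul, norm_pow, norm_mul, norm_I, norm_real, norm_real,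
      Real.norm_eq_abs, Real.norm_eq_abs, abs_of_pos hκ, one_mul, mul_one_div]
    gcongr
  have hrem : ‖∫ x in a..b, ((derivWithin (derivWithin φ (Icc a b)) (Icc a b) x : ℝ) : ℂ)
      * (cexp (I * κ * x) / (I * κ) ^ 2)‖ ≤ B₂ / κ ^ 2 * (b - a) := by
    rw [← abs_of_pos (sub_pos.mpr hab)]
    refine norm_integral_le_of_norm_le_const fun x hx => hnorm _ ?_ x
    simpa [iteratedDerivWithin_eq_iterate] using
      hB₂ x (Ioc_subset_Icc_self (uIoc_of_le hab.le ▸ hx))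
  rw [integral_ofReal_mul_cexp_eq_of_eq_zero hκ.ne' hab hφ ha hb, norm_neg]
  calc _ ≤ B₁ / κ ^ 2 + B₁ / κ ^ 2 + B₂ / κ ^ 2 * (b - a) :=
        (norm_sub_le _ _).trans (add_le_add ((norm_sub_le _ _).trans (add_le_add
          (hnorm _ (by simpa using hB₁ b (right_mem_Icc.mpr hab.le)) b)
          (hnorm _ (by simpa using hB₁ a (left_mem_Icc.mpr hab.le)) a))) hrem)
    _ = (2 * B₁ + (b - a) * B₂) / κ ^ 2 := by ring

end Oscillatory

section Filon

variable {κ a b M : ℝ} {m : ℕ} {f : ℝ → ℝ} {v : Fin (m + 1) → ℝ}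

theorem abs_iteratedDerivWithin_sub_interpolate_le (hab : a < b)
    (hf : ContDiffOn ℝ (m + 1) f (Icc a b))
    (hM : ∀ x ∈ Icc a b, |iteratedDerivWithin (m + 1) f (Icc a b) x| ≤ M)
    (hv : StrictMono v) (hvmem : ∀ i, v i ∈ Icc a b) {k : ℕ} (hk : k ≤ m + 1) :
    ∀ x ∈ Icc a b, |iteratedDerivWithin k
        (f - fun x => (Lagrange.interpolate Finset.univ v fun j => f (v j)).eval x) (Icc a b) x|
      ≤ M * (b - a) ^ (m + 1 - k) := by
  set P := Lagrange.interpolate Finset.univ v fun j => f (v j)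
  have hs : UniqueDiffOn ℝ (Icc a b) := uniqueDiffOn_Icc hab
  have hPC : ContDiffOn ℝ (m + 1) (fun x => P.eval x) (Icc a b) := (P.contDiff_eval _).contDiffOn
  have hPdeg : P.natDegree < m + 1 := by
    rcases eq_or_ne P 0 with hP | hP
    · simp [hP]
    · rw [Polynomial.natDegree_lt_iff_degree_lt hP]
      have := Lagrange.degree_interpolate_lt (s := Finset.univ) (fun j => f (v j))
        hv.injective.injOn
      rwa [Finset.card_univ, Fintype.card_fin] at this
  refine abs_iteratedDerivWithin_le_of_zeros (ψ := f - fun x => P.eval x) hab (hf.sub hPC)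
    (fun x hx => ?_) hv hvmem (fun i => ?_) hk
  · rw [iteratedDerivWithin_sub hx hs (hf x hx) (hPC x hx),
      P.iteratedDerivWithin_eval_eq_zero hPdeg hs hx, sub_zero]
    exact hM x hx
  · rw [Pi.sub_apply, Lagrange.eval_interpolate_at_node _ hv.injective.injOn (Finset.mem_univ i),
      sub_self]

theorem norm_oscInt_sub_filonQ_le (hm : 1 ≤ m) (hκ : 0 < κ) (hab : a < b)
    (hf : ContDiffOn ℝ (m + 1) f (Icc a b))
    (hM : ∀ x ∈ Icc a b, |iteratedDerivWithin (m + 1) f (Icc a b) x| ≤ M)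
    (hv : StrictMono v) (hv0 : v 0 = a) (hvm : v (Fin.last m) = b) :
    ‖oscInt κ f (fun y => y) a b - filonQ κ m (fun y => y) f v‖
      ≤ 3 * M * (b - a) ^ m / κ ^ 2 := by
  set P := Lagrange.interpolate Finset.univ v fun j => f (v j)
  set ψ : ℝ → ℝ := f - fun x => P.eval x
  have hPC : ContinuousOn (fun x => P.eval x) (Icc a b) := P.continuous.continuousOn
  have hψC : ContDiffOn ℝ 2 ψ (Icc a b) :=
    (hf.sub (P.contDiff_eval _).contDiffOn).of_le (by exact_mod_cast Nat.succ_le_succ hm)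
  have hvmem : ∀ i, v i ∈ Icc a b := fun i =>
    ⟨hv0 ▸ hv.monotone (Fin.zero_le i), hvm ▸ hv.monotone (Fin.le_last i)⟩
  have hψv : ∀ i, ψ (v i) = 0 := fun i => by
    rw [show ψ (v i) = f (v i) - P.eval (v i) from rfl,
      Lagrange.eval_interpolate_at_node _ hv.injective.injOn (Finset.mem_univ i), sub_self]
  have hbound := fun k (hk : k ≤ m + 1) =>
    abs_iteratedDerivWithin_sub_interpolate_le hab hf hM hv hvmem hk
  have hdiff : oscInt κ f (fun y => y) a b - filonQ κ m (fun y => y) f v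
      = ∫ x in a..b, (ψ x : ℂ) * cexp (I * κ * x) := by
    rw [oscInt, filonQ, hv0, hvm, ← integral_sub (intervalIntegrable_ofReal_mul_cexp hab.le
      hf.continuousOn) (intervalIntegrable_ofReal_mul_cexp hab.le hPC)]
    simp only [ψ, Pi.sub_apply, ofReal_sub, sub_mul]
  rw [hdiff]
  refine (norm_integral_ofReal_mul_cexp_le hκ hab hψC (hv0 ▸ hψv 0) (hvm ▸ hψv _)
    (hbound 1 (by omega)) (hbound 2 (by omega))).trans_eq ?_
  obtain ⟨k, rfl⟩ : ∃ k, m = k + 1 := ⟨m - 1, by omega⟩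
  simp only [Nat.add_sub_cancel, show k + 1 + 1 - 2 = k by omega]
  ring

end Filon

section GradedMesh

variable {κ : ℝ} {n j : ℕ}

theorem nodeX_zero_eq (κ : ℝ) (n j : ℕ) : nodeX κ 0 n j = κ ^ ((j : ℝ) / n - 1) := by
  simp [nodeX]

theorem nodeX_zero_pos (hκ : 0 < κ) : 0 < nodeX κ 0 n j := by
  rw [nodeX_zero_eq]
  exact Real.rpow_pos_of_pos hκ _

theorem nodeX_zero_zero : nodeX κ 0 n 0 = 1 / κ := by
  simp [nodeX_zero_eq, Real.rpow_neg_one]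

theorem nodeX_zero_self (hn : n ≠ 0) : nodeX κ 0 n n = 1 := by
  simp [nodeX_zero_eq, hn]

theorem nodeX_zero_succ (hκ : 0 < κ) :
    nodeX κ 0 n (j + 1) = nodeX κ 0 n j * κ ^ ((1 : ℝ) / n) := by
  rw [nodeX_zero_eq, nodeX_zero_eq, ← Real.rpow_add hκ]
  push_cast
  ring_nf

theorem nodeX_zero_le_one (hκ : 1 ≤ κ) (hj : j ≤ n) : nodeX κ 0 n j ≤ 1 := by
  rw [nodeX_zero_eq]
  refine Real.rpow_le_one_of_one_le_of_nonpos hκ (sub_nonpos.mpr ?_)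
  exact div_le_one_of_le₀ (by exact_mod_cast hj) n.cast_nonneg

theorem nodeX_zero_lt_succ (hκ : 1 < κ) (hn : n ≠ 0) : nodeX κ 0 n j < nodeX κ 0 n (j + 1) := by
  rw [nodeX_zero_succ (by linarith)]
  exact lt_mul_of_one_lt_right (nodeX_zero_pos (by linarith))
    (Real.one_lt_rpow hκ (by positivity))

theorem nodeX_zero_rpow_le (hκ : 1 ≤ κ) {β : ℝ} (hβ : β ≤ 0) :
    nodeX κ 0 n j ^ β ≤ κ ^ (-β) := by
  rw [nodeX_zero_eq, ← Real.rpow_mul (by linarith)]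
  refine Real.rpow_le_rpow_of_exponent_le hκ ?_
  have : (0 : ℝ) ≤ j / n := by positivity
  nlinarith

/-- Here `s = log κ / n ≤ log 2 < 1`, and `exp s - 1 ≤ 2 s` on `[0, 1]`. -/
theorem natCast_mul_rpow_inv_sub_one_le (hκ : 1 < κ) (hn : Real.log κ / Real.log 2 ≤ n) :
    n * (κ ^ ((1 : ℝ) / n) - 1) ≤ 2 * Real.log κ := by
  rcases n.eq_zero_or_pos with rfl | hn0
  · simp [Real.log_nonneg hκ.le]
  have hn0' : (0 : ℝ) < n := by exact_mod_cast hn0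
  have hlogκ : 0 ≤ Real.log κ := Real.log_nonneg hκ.le
  have hs0 : 0 ≤ Real.log κ / n := by positivity
  have hs1 : Real.log κ / n ≤ 1 := by
    rw [div_le_iff₀ (Real.log_pos one_lt_two)] at hn
    rw [div_le_one hn0']
    nlinarith [Real.log_two_lt_d9]
  have hexp : κ ^ ((1 : ℝ) / n) - 1 ≤ 2 * (Real.log κ / n) := by
    rw [Real.rpow_def_of_pos (by linarith), mul_one_div]
    refine (le_abs_self _).trans ((Real.abs_exp_sub_one_le ?_).trans_eq ?_) <;>
      rw [abs_of_nonneg hs0]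
    exact hs1
  calc n * (κ ^ ((1 : ℝ) / n) - 1) ≤ n * (2 * (Real.log κ / n)) := by gcongr
    _ = 2 * Real.log κ := by field_simp

end GradedMesh

section TypeCondition

variable {f : ℝ → ℝ} {k : ℕ} {C α a b : ℝ}

theorem abs_iteratedDerivWithin_Icc_le (hf : ContDiffOn ℝ k f (Ioc 0 1)) (hC : 0 ≤ C)
    (hfb : ∀ x ∈ Ioc (0 : ℝ) 1, |iteratedDerivWithin k f (Ioc 0 1) x| ≤ C * x ^ (α - k))
    (hα : α ≤ k) (ha : 0 < a) (hab : a < b) (hb : b ≤ 1) :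
    ∀ x ∈ Icc a b, |iteratedDerivWithin k f (Icc a b) x| ≤ C * a ^ (α - k) := by
  intro x hx
  have hsub : Icc a b ⊆ Ioc 0 1 := fun y hy => ⟨ha.trans_le hy.1, hy.2.trans hb⟩
  rw [iteratedDerivWithin_subset hsub (uniqueDiffOn_Icc hab) (uniqueDiffOn_Ioc 0 1) hf hx]
  exact (hfb x (hsub hx)).trans (mul_le_mul_of_nonneg_left
    (Real.rpow_le_rpow_of_nonpos ha hx.1 (sub_nonpos.mpr hα)) hC)

end TypeCondition

section GradedFilon

variable {α C κ : ℝ} {m n j : ℕ} {f : ℝ → ℝ}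

theorem FilonNodes.one {a b : ℝ} {t : Fin 1 → Fin (m + 1) → ℝ} (ht : FilonNodes a b m 1 t) :
    StrictMono (t 0) ∧ t 0 0 = a ∧ t 0 (Fin.last m) = b := by
  obtain ⟨hmono, h0, hlast⟩ := ht 0
  exact ⟨hmono, by simpa using h0, by simpa using hlast⟩

theorem compFilonQ_one (κ : ℝ) (m : ℕ) (g Ψ : ℝ → ℝ) (t : Fin 1 → Fin (m + 1) → ℝ) :
    compFilonQ κ m 1 g Ψ t = filonQ κ m g Ψ (t 0) := by
  simp [compFilonQ]

theorem oscInt_eq_sum_nodeX (hf : ContinuousOn f (Ioc 0 1)) (hκ : 1 < κ) (hn : n ≠ 0) :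
    oscInt κ f (fun y => y) (1 / κ) 1
      = ∑ j : Fin n, oscInt κ f (fun y => y) (nodeX κ 0 n j) (nodeX κ 0 n (j + 1)) := by
  rw [Fin.sum_univ_eq_sum_range (fun j => oscInt κ f (fun y => y) (nodeX κ 0 n j)
    (nodeX κ 0 n (j + 1))), ← nodeX_zero_zero (n := n), ← nodeX_zero_self (κ := κ) hn]
  refine (sum_integral_adjacent_intervals fun i hi => ?_).symm
  have hsub : Icc (nodeX κ 0 n i) (nodeX κ 0 n (i + 1)) ⊆ Ioc 0 1 := fun y hy =>
    ⟨(nodeX_zero_pos (by linarith)).trans_le hy.1, hy.2.trans (nodeX_zero_le_one hκ.le hi)⟩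
  exact intervalIntegrable_ofReal_mul_cexp (nodeX_zero_lt_succ hκ hn).le (hf.mono hsub)

theorem norm_oscInt_sub_compFilonQ_nodeX_le (hα : α < 1) (hm : 1 ≤ m)
    (hf : ContDiffOn ℝ (m + 1) f (Ioc 0 1)) (hC : 0 ≤ C)
    (hfb : ∀ x ∈ Ioc (0 : ℝ) 1,
      |iteratedDerivWithin (m + 1) f (Ioc 0 1) x| ≤ C * x ^ (α - ((m + 1 : ℕ) : ℝ)))
    (hκ : 1 < κ) (hn : n ≠ 0) (hj : j < n) {t : Fin 1 → Fin (m + 1) → ℝ}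
    (ht : FilonNodes (nodeX κ 0 n j) (nodeX κ 0 n (j + 1)) m 1 t) :
    ‖oscInt κ f (fun y => y) (nodeX κ 0 n j) (nodeX κ 0 n (j + 1))
        - compFilonQ κ m 1 (fun y => y) f t‖
      ≤ 3 * C * κ ^ (1 - α) * (κ ^ ((1 : ℝ) / n) - 1) ^ m / κ ^ 2 := by
  set a := nodeX κ 0 n j
  set θ := κ ^ ((1 : ℝ) / n) - 1
  have hκ0 : 0 < κ := by linarith
  have ha : 0 < a := nodeX_zero_pos hκ0
  have hab : a < nodeX κ 0 n (j + 1) := nodeX_zero_lt_succ hκ hn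
  have hgap : nodeX κ 0 n (j + 1) - a = a * θ := by rw [nodeX_zero_succ hκ0]; ring
  have hθ : 0 ≤ θ := sub_nonneg.mpr (Real.one_le_rpow hκ.le (by positivity))
  obtain ⟨hmono, h0, hlast⟩ := ht.one
  have hM := abs_iteratedDerivWithin_Icc_le hf hC hfb (by push_cast; linarith) ha hab
    (nodeX_zero_le_one hκ.le hj)
  rw [compFilonQ_one]
  refine (norm_oscInt_sub_filonQ_le hm hκ0 hab (hf.mono fun y hy =>
    ⟨ha.trans_le hy.1, hy.2.trans (nodeX_zero_le_one hκ.le hj)⟩) hM hmono h0 hlast).trans ?_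
  have hpow : a ^ (α - ((m + 1 : ℕ) : ℝ)) * a ^ m = a ^ (α - 1) := by
    rw [← Real.rpow_natCast a m, ← Real.rpow_add ha]
    push_cast
    ring_nf
  calc 3 * (C * a ^ (α - ((m + 1 : ℕ) : ℝ))) * (nodeX κ 0 n (j + 1) - a) ^ m / κ ^ 2
      = 3 * C * a ^ (α - 1) * θ ^ m / κ ^ 2 := by rw [hgap, mul_pow, ← hpow]; ring
    _ ≤ 3 * C * κ ^ (1 - α) * θ ^ m / κ ^ 2 := by
        gcongr
        simpa using nodeX_zero_rpow_le hκ.le (β := α - 1) (by linarith)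

end GradedFilon

/-- polynomial-order error bound for the composite moment-free Filon rule on
`Λ = [1/κ, 1]` for the linear oscillator `g(x) = x`, with partition `x_j = κ^{j/n-1}` and
`N_j = 1`. -/
theorem stmt_12 (α : ℝ) (hα : α ∈ Set.Ioo (-1:ℝ) 1) (m : ℕ) (hm : 1 ≤ m)
    (f : ℝ → ℝ)
    (hfC : ContDiffOn ℝ (m+1) f (Set.Ioc 0 1))
    (hfb : ∃ cf : ℝ, 0 < cf ∧ ∀ j ≤ m+1, ∀ x ∈ Set.Ioc (0:ℝ) 1,
      |iteratedDerivWithin j f (Set.Ioc 0 1) x| ≤ cf * x ^ (α - (j:ℝ))) :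
    ∃ c : ℝ, 0 < c ∧ ∀ (κ : ℝ) (n : ℕ), 1 < κ → 1 ≤ n →
      Real.log κ / Real.log 2 ≤ (n:ℝ) →
      ∀ (t : (j : Fin n) → Fin 1 → Fin (m+1) → ℝ),
      (∀ j : Fin n, FilonNodes (nodeX κ 0 n j.val) (nodeX κ 0 n (j.val+1)) m 1 (t j)) →
      ‖oscInt κ f (fun y => y) (1/κ) 1 -
          ∑ j : Fin n, compFilonQ κ m 1 (fun y => y) f (t j)‖
        ≤ c * κ ^ (-α-1) * Real.log κ * (κ ^ ((1:ℝ)/(n:ℝ)) - 1)^(m-1) := by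
  obtain ⟨cf, hcf, hfb⟩ := hfb
  refine ⟨6 * cf, by positivity, fun κ n hκ hn hlog t ht => ?_⟩
  set θ := κ ^ ((1 : ℝ) / n) - 1
  have hθ : 0 ≤ θ := sub_nonneg.mpr (Real.one_le_rpow hκ.le (by positivity))
  have hn0 : n ≠ 0 := by omega
  rw [oscInt_eq_sum_nodeX hfC.continuousOn hκ hn0, ← Finset.sum_sub_distrib]
  calc _ ≤ ∑ _j : Fin n, 3 * cf * κ ^ (1 - α) * θ ^ m / κ ^ 2 :=
        (norm_sum_le _ _).trans <| Finset.sum_le_sum fun j _ =>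
          norm_oscInt_sub_compFilonQ_nodeX_le hα.2 hm hfC hcf.le (hfb (m + 1) le_rfl) hκ hn0 j.2
            (ht j)
    _ = 3 * cf * (κ ^ (1 - α) / κ ^ 2) * θ ^ (m - 1) * (n * θ) := by
        rw [Finset.sum_const, Finset.card_univ, Fintype.card_fin, nsmul_eq_mul,
          ← pow_sub_one_mul (by omega : m ≠ 0)]
        ring
    _ ≤ 3 * cf * (κ ^ (1 - α) / κ ^ 2) * θ ^ (m - 1) * (2 * Real.log κ) := by
        gcongr 3 * cf * (κ ^ (1 - α) / κ ^ 2) * θ ^ (m - 1) * ?_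
        exact natCast_mul_rpow_inv_sub_one_le hκ hlog
    _ = 6 * cf * κ ^ (-α - 1) * Real.log κ * θ ^ (m - 1) := by
        rw [← Real.rpow_natCast, ← Real.rpow_sub (by linarith)]
        ring_nf
end
end

section
/- Let α ∈ (−1,1) and, for integers n ≥ 1 and 1 ≤ j ≤ n, set m_j := n + ⌈(n+1−j)(1−α)⌉. There exists a positive constant c such that for every real K > 1, every n ∈ ℕ satisfying τ_n ≤ (n−1)/e where τ_n := K^{1/n}(K^{1/n} − 1), and every j ∈ {1, …, n}, one has τ_n^{m_j − n}/(m_j − 2)! ≤ c (n−1)^{−1/2}. Moreover, under the same condition τ_n ≤ (n−1)/e, one has K^{1/n} ≤ 2(n−1)^{1/2}. -/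
lemma sq_le_two_factorial (m : ℕ) : m ^ 2 ≤ 2 * m.factorial := by
  induction m with
  | zero => simp
  | succ m ih =>
    rcases Nat.eq_zero_or_pos m with h | h
    · subst h; simp [Nat.factorial]
    · have h1 : m + 1 ≤ 2 * m.factorial := by
        have := Nat.self_le_factorial m
        omega
      calc (m+1)^2 = (m+1) * (m+1) := by ring
        _ ≤ (m+1) * (2 * m.factorial) := Nat.mul_le_mul_left _ h1
        _ = 2 * (m+1).factorial := by rw [Nat.factorial_succ]; ring

set_option maxHeartbeats 1000000 in
/-- with `m_j = n + ⌈(n+1-j)(1-α)⌉` and `τ_n = K^{1/n}(K^{1/n}-1)`, there is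
`c > 0` such that whenever `K > 1` and `τ_n ≤ (n-1)/e`, one has
`τ_n^{m_j-n}/(m_j-2)! ≤ c (n-1)^{-1/2}` for `1 ≤ j ≤ n`, and moreover
`K^{1/n} ≤ 2(n-1)^{1/2}`. -/
theorem stmt_16 (α : ℝ) (hα : α ∈ Set.Ioo (-1:ℝ) 1) :
    ∃ c : ℝ, 0 < c ∧ ∀ (K : ℝ) (n : ℕ), 1 < K → 1 ≤ n →
      K ^ ((1:ℝ)/(n:ℝ)) * (K ^ ((1:ℝ)/(n:ℝ)) - 1) ≤ ((n:ℝ)-1)/Real.exp 1 →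
      (∀ j : ℕ, 1 ≤ j → j ≤ n →
        (K ^ ((1:ℝ)/(n:ℝ)) * (K ^ ((1:ℝ)/(n:ℝ)) - 1))
            ^ ((n + ⌈((n:ℝ)+1-(j:ℝ))*(1-α)⌉₊) - n) /
          ((Nat.factorial ((n + ⌈((n:ℝ)+1-(j:ℝ))*(1-α)⌉₊) - 2)) : ℝ)
        ≤ c * ((n:ℝ)-1) ^ (-(1:ℝ)/2))
      ∧ K ^ ((1:ℝ)/(n:ℝ)) ≤ 2*((n:ℝ)-1) ^ ((1:ℝ)/2) := by
  refine ⟨2, by norm_num, ?_⟩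
  intro K n hK hn hτ
  set x : ℝ := K ^ ((1:ℝ)/(n:ℝ)) with hxdef
  have he1 : (1:ℝ) < Real.exp 1 := by
    have := Real.exp_one_gt_d9; linarith
  have hepos : (0:ℝ) < Real.exp 1 := by linarith
  have hx1 : 1 < x := by
    exact (Real.one_lt_rpow_iff_of_pos (by linarith : (0:ℝ) < K)).mpr (Or.inl ⟨hK, by positivity⟩)
  have hτpos : 0 < x * (x - 1) := mul_pos (by linarith) (by linarith)
  -- n ≥ 2
  have hb0 : (0:ℝ) < (n:ℝ) - 1 := by
    by_contra h
    push_neg at h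
    have : ((n:ℝ)-1)/Real.exp 1 ≤ 0 := div_nonpos_of_nonpos_of_nonneg h (le_of_lt hepos)
    linarith
  have hn2 : 2 ≤ n := by
    by_contra h
    interval_cases n <;> simp_all
  set b : ℝ := (n:ℝ) - 1 with hbdef
  have hb1 : (1:ℝ) ≤ b := by
    have : (2:ℝ) ≤ (n:ℝ) := by exact_mod_cast hn2
    simp [hbdef]; linarith
  have hbcast : b = ((n - 1 : ℕ) : ℝ) := by
    have : ((n - 1 : ℕ) : ℝ) = (n:ℝ) - 1 := by
      have := Nat.cast_sub hn (R := ℝ)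
      simpa using this
    rw [this]
  -- √b facts
  set s : ℝ := b ^ ((1:ℝ)/2) with hsdef
  have hss : s * s = b := by
    rw [hsdef, ← Real.rpow_add (by linarith : (0:ℝ) < b)]
    norm_num
  have hs1 : (1:ℝ) ≤ s := by
    rw [hsdef]
    apply Real.one_le_rpow hb1 (by norm_num)
  have hsb : s ≤ b := by nlinarith
  constructor
  · intro j hj1 hjn
    set k : ℕ := ⌈((n:ℝ)+1-(j:ℝ))*(1-α)⌉₊ with hkdef
    have hk1 : 1 ≤ k := by
      rw [hkdef]
      rw [Nat.one_le_ceil_iff]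
      have hjr : (j:ℝ) ≤ (n:ℝ) := by exact_mod_cast hjn
      have h1α : 0 < 1 - α := by have := hα.2; linarith
      nlinarith
    have hsub : (n + k) - n = k := Nat.add_sub_cancel_left n k
    rw [hsub]
    have hm2 : n + k - 2 = (n - 1) + (k - 1) := by omega
    rw [hm2]
    set F : ℝ := ((n-1).factorial : ℝ) with hFdef
    have hFpos : 0 < F := by positivity
    -- factorial lower bound
    have hfact : F * b ^ (k - 1) ≤ (((n - 1) + (k - 1)).factorial : ℝ) := by
      have h1 : (n-1).factorial * ((n-1)+1) ^ (k-1) ≤ ((n-1) + (k-1)).factorial :=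
        Nat.factorial_mul_pow_le_factorial
      have h2 : (n-1).factorial * (n-1) ^ (k-1) ≤ (n-1).factorial * ((n-1)+1) ^ (k-1) :=
        Nat.mul_le_mul_left _ (Nat.pow_le_pow_left (Nat.le_succ _) _)
      have h3 : (n-1).factorial * (n-1) ^ (k-1) ≤ ((n-1) + (k-1)).factorial := le_trans h2 h1
      have := (Nat.cast_le (α := ℝ)).mpr h3
      push_cast at this
      rw [hbcast]
      convert this using 2
    have hfactpos : (0:ℝ) < (((n - 1) + (k - 1)).factorial : ℝ) := by positivity
    have key : (x * (x-1)) ^ k / (((n - 1) + (k - 1)).factorial : ℝ) ≤ b / (Real.exp 1 * F) := by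
      rw [div_le_div_iff₀ hfactpos (by positivity)]
      have stepA : (x*(x-1))^k ≤ (b / Real.exp 1)^k :=
        pow_le_pow_left₀ (le_of_lt hτpos) hτ k
      have stepB : (b / Real.exp 1)^k * Real.exp 1 ≤ b ^ k := by
        rw [div_pow, div_mul_eq_mul_div, div_le_iff₀ (by positivity : (0:ℝ) < Real.exp 1 ^ k)]
        have : Real.exp 1 ≤ Real.exp 1 ^ k := le_self_pow₀ (le_of_lt he1) (by omega)
        have hbk : (0:ℝ) ≤ b ^ k := by positivity
        calc b ^ k * Real.exp 1 ≤ b ^ k * Real.exp 1 ^ k :=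
              mul_le_mul_of_nonneg_left this hbk
          _ = b ^ k * Real.exp 1 ^ k := rfl
      have stepC : b ^ k * F ≤ b * (((n - 1) + (k - 1)).factorial : ℝ) := by
        have hbk : b ^ k = b * b ^ (k-1) := by
          conv_lhs => rw [show k = (k-1) + 1 by omega]
          rw [pow_succ]; ring
        rw [hbk]
        have : b * (b ^ (k-1) * F) ≤ b * (((n - 1) + (k - 1)).factorial : ℝ) := by
          apply mul_le_mul_of_nonneg_left _ (by linarith)
          rw [mul_comm]; exact hfact
        linarith [this]
      calc (x*(x-1))^k * (Real.exp 1 * F)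
          = ((x*(x-1))^k * Real.exp 1) * F := by ring
        _ ≤ ((b / Real.exp 1)^k * Real.exp 1) * F := by
              apply mul_le_mul_of_nonneg_right _ (le_of_lt hFpos)
              exact mul_le_mul_of_nonneg_right stepA (le_of_lt hepos)
        _ ≤ b ^ k * F := mul_le_mul_of_nonneg_right stepB (le_of_lt hFpos)
        _ ≤ b * (((n - 1) + (k - 1)).factorial : ℝ) := stepC
    refine le_trans key ?_
    -- b/(eF) ≤ 2 * b^(-1/2)
    have hneg : b ^ (-(1:ℝ)/2) = s⁻¹ := by
      rw [hsdef, show (-(1:ℝ)/2) = -((1:ℝ)/2) by norm_num,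
        Real.rpow_neg (by linarith : (0:ℝ) ≤ b)]
    rw [hneg]
    rw [div_le_iff₀ (by positivity : (0:ℝ) < Real.exp 1 * F)]
    have hquad : b ^ 2 ≤ 2 * F := by
      have := sq_le_two_factorial (n-1)
      have h := (Nat.cast_le (α := ℝ)).mpr this
      push_cast at h
      rw [hbcast, hFdef]
      exact_mod_cast h
    have hspos : 0 < s := by linarith
    rw [show 2 * s⁻¹ * (Real.exp 1 * F) = 2 * (Real.exp 1 * F) / s by field_simp,
      le_div_iff₀ hspos]
    nlinarith [hquad, hsb, hss, he1, hFpos, hb0]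
  · -- K^{1/n} ≤ 2 √(n-1)
    by_contra h
    push_neg at h
    have h1 : b / Real.exp 1 ≤ b := by
      rw [div_le_iff₀ hepos]; nlinarith
    have h2s : 2 * s < x := h
    have c1 : 0 < x - 2*s := by linarith
    have c2 : 0 < x - 1 - s := by linarith
    nlinarith [mul_pos c1 c2, hss, hs1, hτ, h1, hb1]
end
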